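/- arXiv:2405.06369 — 3 statements merged into one kernel-verified Lean document; each statement's English description precedes it below -/
import Mathlib

section
/- Let A be a reduced Noetherian commutative ring with minimal prime ideals p₁,…,pₘ, and let A → R be a flat ring homomorphism such that R ⊗_A k(pᵢ) is reduced for every i (where k(pᵢ) is the residue field at pᵢ). Then R is reduced. -/
/-!
A reduced ring embeds into the product of the residue fields at its minimal primes, and
for a Noetherian ring this product is finite. Tensoring with the flat module `R` keeps the
embedding injective and commutes with the finite product, so `R` embeds into the product of
the reduced fibers `k(p) ⊗[A] R`.
-/

open TensorProduct

theorem injective_algebraMap_pi_fractionRing_minimalPrimes (A : Type*) [CommRing A]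
    [IsReduced A] :
    Function.Injective
      (algebraMap A (∀ p : minimalPrimes A, FractionRing (A ⧸ (p : Ideal A)))) := by
  rw [injective_iff_map_eq_zero]
  intro a ha
  have mem_minimalPrimes : ∀ p ∈ minimalPrimes A, a ∈ p := by
    intro p hp
    have : p.IsPrime := hp.1.1
    have h := congrFun ha ⟨p, hp⟩
    rwa [Pi.algebraMap_apply, Pi.zero_apply, IsScalarTower.algebraMap_apply A (A ⧸ p),
      map_eq_zero_iff _ (IsFractionRing.injective _ _), Ideal.Quotient.algebraMap_eq,
      Ideal.Quotient.eq_zero_iff_mem] at h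
  have mem_nilradical : a ∈ nilradical A := by
    rw [nilradical, ← Ideal.sInf_minimalPrimes]
    exact Submodule.mem_sInf.mpr mem_minimalPrimes
  rwa [nilradical_eq_zero, Submodule.zero_eq_bot, Ideal.mem_bot] at mem_nilradical

theorem Module.Flat.isReduced_of_injective_algebraMap_pi {A R ι : Type*} [CommRing A]
    [CommRing R] [Algebra A R] [Module.Flat A R] [Finite ι] (B : ι → Type*)
    [∀ i, CommRing (B i)] [∀ i, Algebra A (B i)]
    (hB : Function.Injective (algebraMap A (∀ i, B i)))
    (hred : ∀ i, IsReduced (B i ⊗[A] R)) :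
    IsReduced R := by
  classical
  have := Fintype.ofFinite ι
  let e : (∀ i, B i) ⊗[A] R ≃ₐ[A] ∀ i, B i ⊗[A] R :=
    (Algebra.TensorProduct.comm A _ R).trans <| (Algebra.TensorProduct.piRight A A R B).trans <|
      AlgEquiv.piCongrRight fun i => Algebra.TensorProduct.comm A R (B i)
  have : IsReduced ((∀ i, B i) ⊗[A] R) := isReduced_of_injective e e.injective
  exact isReduced_of_injective _ (Algebra.TensorProduct.includeRight_injective hB)

/-- Let `A` be a reduced Noetherian commutative ring and `A → R` a flat
ring homomorphism (i.e. `R` is a flat `A`-algebra) such that for every minimal prime `p`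
of `A` the fiber `R ⊗[A] k(p)` is reduced, where `k(p) = Frac(A ⧸ p)` is the residue
field at `p`. Then `R` is reduced. -/
theorem reduced_of_flat_of_reduced_fibers_at_minimal_primes
    (A R : Type*) [CommRing A] [CommRing R] [IsNoetherianRing A] [IsReduced A]
    [Algebra A R] [Module.Flat A R]
    (hfib : ∀ (p : Ideal A) (hp : p ∈ minimalPrimes A),
      letI : p.IsPrime := hp.1.1
      IsReduced (TensorProduct A (FractionRing (A ⧸ p)) R)) :
    IsReduced R :=
  have := (minimalPrimes.finite_of_isNoetherianRing A).to_subtype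
  Module.Flat.isReduced_of_injective_algebraMap_pi
    (fun p : minimalPrimes A => FractionRing (A ⧸ (p : Ideal A)))
    (injective_algebraMap_pi_fractionRing_minimalPrimes A) fun p => hfib p p.2
end

section
/- Let C be a complete Noetherian local ring with maximal ideal M, and let g ∈ C[[T]] be a formal power series whose reduction modulo M is a nonzero power series in (C/M)[[T]]. Then g is not a zero divisor in C[[T]]. -/
open IsLocalRing

theorem PowerSeries.IsWeierstrassDivisorAt.mem_nonZeroDivisors {A : Type*} [CommRing A]
    {g : PowerSeries A} {I : Ideal A} [IsHausdorff I A] (H : g.IsWeierstrassDivisorAt I) :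
    g ∈ nonZeroDivisors (PowerSeries A) :=
  -- `g * f = 0` is a Weierstrass division of `0` by `g`, so uniqueness forces `f = 0`.
  mem_nonZeroDivisors_iff_left.2 fun f hf ↦
    (H.eq_zero_of_mul_eq (r := 0) (by simp) (by rw [hf, Polynomial.coe_zero])).1

theorem powerSeries_nonZeroDivisor_of_residue_ne_zero_general
    (C : Type*) [CommRing C] [IsLocalRing C]
    [IsAdicComplete (maximalIdeal C) C]
    (g : PowerSeries C) (hg : PowerSeries.map (residue C) g ≠ 0) :
    g ∈ nonZeroDivisors (PowerSeries C) :=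
  (PowerSeries.IsWeierstrassDivisor.of_map_ne_zero hg).mem_nonZeroDivisors

/-- Let `C` be a complete Noetherian local ring with maximal ideal `M` and
let `g ∈ C⟦T⟧` be a formal power series whose reduction modulo `M` is a nonzero power
series in `(C/M)⟦T⟧`. Then `g` is not a zero divisor in `C⟦T⟧`. -/
theorem powerSeries_nonZeroDivisor_of_residue_ne_zero
    (C : Type*) [CommRing C] [IsLocalRing C] [IsNoetherianRing C]
    [IsAdicComplete (maximalIdeal C) C]
    (g : PowerSeries C) (hg : PowerSeries.map (residue C) g ≠ 0) :
    g ∈ nonZeroDivisors (PowerSeries C) :=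
  powerSeries_nonZeroDivisor_of_residue_ne_zero_general C g hg
end

section
/- Let k be a field and f ∈ k[[T₁,…,Tₙ]] a nonzero formal power series. Then there exist positive integers u₁,…,u_{n-1} such that the k-algebra automorphism s of k[[T₁,…,Tₙ]] defined by s(Tᵢ) = Tᵢ + Tₙ^{uᵢ} for i < n and s(Tₙ) = Tₙ sends f to a power series g with g(0,…,0,Tₙ) ≠ 0. -/
/-! Let `e₀` be the lexicographically smallest exponent of `f` and `B = |e₀| + 1`, and take
`uᵢ = B ^ (n - i)`, so that `uₙ = 1`. Setting `T₁, …, T_{n-1}` to `0` in `s f` gives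
`f(Tₙ^{u₁}, …, Tₙ^{uₙ})`, whose coefficient of `Tₙ^m` is the sum of the coefficients `f_e` over
the `e` of weight `∑ uᵢ eᵢ = m`. The weight of `e₀` is its base-`B` expansion, so every
lexicographically larger exponent has strictly larger weight, and for `m` the weight of `e₀` the
only contribution is `f_{e₀} ≠ 0`. -/

open Finsupp

theorem Finset.sum_eq_sum_lt_add_add_sum_gt {ι M : Type*} [LinearOrder ι] [Fintype ι]
    [AddCommMonoid M] (f : ι → M) (j : ι) :
    ∑ i, f i = ∑ i with i < j, f i + f j + ∑ i with j < i, f i := by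
  have htri : ∀ i, f i = ((if i < j then f i else 0) + (if i = j then f i else 0)) +
      (if j < i then f i else 0) := by
    intro i
    rcases lt_trichotomy i j with h | rfl | h
    · simp [h, h.ne, h.not_gt]
    · simp
    · simp [h, h.ne', h.not_gt]
  rw [Finset.sum_congr rfl fun i _ => htri i, Finset.sum_add_distrib, Finset.sum_add_distrib,
    Finset.sum_ite_eq', ← Finset.sum_filter, ← Finset.sum_filter, if_pos (Finset.mem_univ j)]

namespace Finsupp

theorem weight_lt_weight_of_toLex_lt {ι : Type*} [LinearOrder ι] [Fintype ι] {u : ι → ℕ}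
    {e₀ e : ι →₀ ℕ} (hu : ∀ j, ∑ i with j < i, u i * e₀ i < u j) (h : toLex e₀ < toLex e) :
    weight u e₀ < weight u e := by
  obtain ⟨j, heq, hlt⟩ := Finsupp.Lex.lt_iff.mp h
  simp only [ofLex_toLex] at heq hlt
  have hhead : ∑ i with i < j, u i * e₀ i = ∑ i with i < j, u i * e i :=
    Finset.sum_congr rfl fun i hi => by rw [heq i (Finset.mem_filter.mp hi).2]
  simp only [weight_eq_sum, smul_eq_mul, mul_comm _ (u _)]
  rw [Finset.sum_eq_sum_lt_add_add_sum_gt _ j, Finset.sum_eq_sum_lt_add_add_sum_gt _ j, hhead,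
    add_assoc, add_assoc]
  gcongr ?_ + ?_
  calc u j * e₀ j + ∑ i with j < i, u i * e₀ i < u j * (e₀ j + 1) := by
        rw [mul_add_one]; exact Nat.add_lt_add_left (hu j) _
    _ ≤ u j * e j := Nat.mul_le_mul_left _ hlt
    _ ≤ u j * e j + ∑ i with j < i, u i * e i := Nat.le_add_right _ _

theorem sum_pow_rev_mul_lt {n B : ℕ} (e : Fin n →₀ ℕ) (hB : e.degree < B) (j : Fin n) :
    ∑ i with j < i, B ^ (i.rev : ℕ) * e i < B ^ (j.rev : ℕ) := by
  have hB0 : 0 < B := by omega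
  refine Nat.lt_of_mul_lt_mul_left (a := B) ?_
  calc B * ∑ i with j < i, B ^ (i.rev : ℕ) * e i
        = ∑ i with j < i, B ^ ((i.rev : ℕ) + 1) * e i := by
          rw [Finset.mul_sum]; simp only [pow_succ', mul_assoc]
    _ ≤ ∑ i, B ^ (j.rev : ℕ) * e i := by
          refine (Finset.sum_le_sum fun i hi => ?_).trans
            (Finset.sum_le_sum_of_subset (Finset.filter_subset _ _))
          gcongr
          exact Fin.rev_lt_rev.mpr (Finset.mem_filter.mp hi).2
    _ = B ^ (j.rev : ℕ) * e.degree := by rw [← Finset.mul_sum, degree_eq_sum]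
    _ < B ^ (j.rev : ℕ) * B := by gcongr
    _ = B * B ^ (j.rev : ℕ) := mul_comm _ _

end Finsupp

namespace MvPowerSeries

section Shear

variable {σ R : Type*} [CommRing R] [DecidableEq σ] {ℓ : σ} {u : σ → ℕ}

variable (ℓ u) in
noncomputable def shear (c : R) (i : σ) : MvPowerSeries σ R :=
  if i = ℓ then X ℓ else X i + c • X ℓ ^ u i

theorem shear_zero : shear ℓ u (0 : R) = X := by
  ext1 i
  by_cases hi : i = ℓ <;> simp [shear, hi]

theorem constantCoeff_shear (hu : ∀ i ≠ ℓ, u i ≠ 0) (c : R) (i : σ) :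
    constantCoeff (shear ℓ u c i) = 0 := by
  by_cases hi : i = ℓ <;> simp [shear, hi, hu i]

variable [Finite σ]

theorem hasSubst_shear (hu : ∀ i ≠ ℓ, u i ≠ 0) (c : R) : HasSubst (shear ℓ u c) :=
  hasSubst_of_constantCoeff_zero (constantCoeff_shear hu c)

theorem subst_shear_shear (hu : ∀ i ≠ ℓ, u i ≠ 0) (c c' : R) (i : σ) :
    subst (shear ℓ u c') (shear ℓ u c i) = shear ℓ u (c + c') i := by
  have hs := hasSubst_shear hu c'
  by_cases hi : i = ℓ
  · simp [shear, hi, subst_X hs]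
  · simp only [shear, hi, if_false, subst_add hs, subst_smul hs, subst_pow hs, subst_X hs,
      if_true, add_smul]
    abel

noncomputable def shearAlgEquiv (hu : ∀ i ≠ ℓ, u i ≠ 0) (c : R) :
    MvPowerSeries σ R ≃ₐ[R] MvPowerSeries σ R :=
  AlgEquiv.ofAlgHom (substAlgHom (hasSubst_shear hu c)) (substAlgHom (hasSubst_shear hu (-c)))
    (AlgHom.ext fun f => by
      simp [subst_comp_subst_apply (hasSubst_shear hu (-c)) (hasSubst_shear hu c),
        subst_shear_shear hu, shear_zero, subst_self])
    (AlgHom.ext fun f => by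
      simp [subst_comp_subst_apply (hasSubst_shear hu c) (hasSubst_shear hu (-c)),
        subst_shear_shear hu, shear_zero, subst_self])

theorem shearAlgEquiv_apply (hu : ∀ i ≠ ℓ, u i ≠ 0) (c : R) (f : MvPowerSeries σ R) :
    shearAlgEquiv hu c f = subst (shear ℓ u c) f :=
  substAlgHom_apply (hasSubst_shear hu c) f

theorem shearAlgEquiv_X (hu : ∀ i ≠ ℓ, u i ≠ 0) (c : R) (i : σ) :
    shearAlgEquiv hu c (X i) = shear ℓ u c i := by
  rw [shearAlgEquiv_apply, subst_X (hasSubst_shear hu c)]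

end Shear

section LastVariable

variable {σ R : Type*} [CommRing R] (ℓ : σ)

theorem prod_X_pow_pow (u : σ → ℕ) (d : σ →₀ ℕ) :
    (d.prod fun i e => (X ℓ ^ u i) ^ e : MvPowerSeries σ R) = X ℓ ^ weight u d := by
  simp only [← pow_mul, Finsupp.prod, Finset.prod_pow_eq_pow_sum, weight_apply, Finsupp.sum,
    smul_eq_mul, mul_comm]

variable [DecidableEq σ]

-- `rescale (Pi.single ℓ 1)` substitutes `0` for every variable other than `X ℓ`.
theorem coeff_single_rescale_single_one (m : ℕ) (g : MvPowerSeries σ R) :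
    coeff (single ℓ m) (rescale (Pi.single ℓ 1) g) = coeff (single ℓ m) g := by
  simp [coeff_rescale]

theorem subst_single_one_smul_X_shear {u : σ → ℕ} (huℓ : u ℓ = 1) (i : σ) :
    subst ((Pi.single ℓ 1 : σ → R) • (X : σ → MvPowerSeries σ R)) (shear ℓ u (1 : R) i) =
      X ℓ ^ u i := by
  have hs : HasSubst (Pi.single ℓ (1 : R) • X : σ → MvPowerSeries σ R) := HasSubst.smul_X _
  by_cases hi : i = ℓ
  · simp [shear, hi, subst_X hs, huℓ]
  · simp [shear, hi, subst_add hs, subst_pow hs, subst_X hs]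

variable [Finite σ]

theorem coeff_single_subst_shear {u : σ → ℕ} (hu : ∀ i, u i ≠ 0) (huℓ : u ℓ = 1) (m : ℕ)
    (f : MvPowerSeries σ R) :
    coeff (single ℓ m) (subst (shear ℓ u (1 : R)) f) =
      coeff (single ℓ m) (subst (fun i => X ℓ ^ u i) f) := by
  rw [← coeff_single_rescale_single_one, rescale_eq_subst,
    subst_comp_subst_apply (hasSubst_shear (fun i _ => hu i) 1) (HasSubst.smul_X _)]
  simp_rw [subst_single_one_smul_X_shear ℓ huℓ]

theorem coeff_single_weight_subst_X_pow {u : σ → ℕ} (hu : ∀ i, u i ≠ 0)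
    {f : MvPowerSeries σ R} {e₀ : σ →₀ ℕ}
    (he₀ : ∀ d, coeff d f ≠ 0 → weight u d = weight u e₀ → d = e₀) :
    coeff (single ℓ (weight u e₀)) (subst (fun i => X ℓ ^ u i) f) = coeff e₀ f := by
  have hs : HasSubst (fun i => (X ℓ ^ u i : MvPowerSeries σ R)) :=
    hasSubst_of_constantCoeff_zero fun i => by simp [hu i]
  rw [coeff_subst hs, finsum_eq_single _ e₀]
  · simp [prod_X_pow_pow, coeff_X_pow]
  · intro d hd
    by_cases hfd : coeff d f = 0
    · simp [hfd]
    · have : single ℓ (weight u e₀) ≠ single ℓ (weight u d) :=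
        fun h => hd (he₀ d hfd (single_injective ℓ h).symm)
      simp [prod_X_pow_pow, coeff_X_pow, this]

end LastVariable

end MvPowerSeries

open MvPowerSeries in
/-- Weierstrass-type preparation of the variables. Let `k` be a field and
`f ∈ k[[T₁,…,Tₙ]]` a nonzero formal power series, `n ≥ 1`. Then there are positive
integers `u₁,…,u_{n-1}` and a `k`-algebra automorphism `s` of `k[[T₁,…,Tₙ]]` with
`s(Tᵢ) = Tᵢ + Tₙ^{uᵢ}` for `i < n` and `s(Tₙ) = Tₙ`, such that `g = s(f)` satisfies
`g(0,…,0,Tₙ) ≠ 0`, i.e. some coefficient of `g` at a pure power of `Tₙ` is nonzero. -/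
theorem exists_automorphism_powerSeries_last_var_ne_zero
    (k : Type*) [Field k] (n : ℕ) (hn : 1 ≤ n)
    (f : MvPowerSeries (Fin n) k) (hf : f ≠ 0) :
    ∃ (u : Fin n → ℕ), (∀ i, 0 < u i) ∧
      ∃ s : MvPowerSeries (Fin n) k ≃ₐ[k] MvPowerSeries (Fin n) k,
        (∀ i : Fin n, i ≠ ⟨n - 1, by omega⟩ →
          s (MvPowerSeries.X i) =
            MvPowerSeries.X i + MvPowerSeries.X (⟨n - 1, by omega⟩ : Fin n) ^ u i) ∧
        s (MvPowerSeries.X (⟨n - 1, by omega⟩ : Fin n)) =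
          MvPowerSeries.X (⟨n - 1, by omega⟩ : Fin n) ∧
        ∃ m : ℕ, MvPowerSeries.coeff
          (Finsupp.single (⟨n - 1, by omega⟩ : Fin n) m) (s f) ≠ 0 := by
  set ℓ : Fin n := ⟨n - 1, by omega⟩
  obtain ⟨e₀, he₀⟩ := exists_finsupp_eq_lexOrder_of_ne_zero hf
  set u : Fin n → ℕ := fun i => (e₀.degree + 1) ^ (i.rev : ℕ)
  have hu : ∀ i, 0 < u i := fun i => by positivity
  have huℓ : u ℓ = 1 := by simp [u, ℓ, Fin.val_rev, Nat.sub_add_cancel hn]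
  have hu0 : ∀ i, u i ≠ 0 := fun i => (hu i).ne'
  have hu' : ∀ i ≠ ℓ, u i ≠ 0 := fun i _ => hu0 i
  refine ⟨u, hu, shearAlgEquiv hu' 1, fun i hi => ?_, ?_, weight u e₀, ?_⟩
  · simp [shearAlgEquiv_X, shear, hi]
  · simp [shearAlgEquiv_X, shear]
  rw [shearAlgEquiv_apply, coeff_single_subst_shear ℓ hu0 huℓ,
    coeff_single_weight_subst_X_pow ℓ hu0]
  · exact coeff_ne_zero_of_lexOrder he₀.symm
  intro d hd hw
  by_contra hne
  have hlt : toLex e₀ < toLex d :=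
    (WithTop.coe_le_coe.mp (he₀ ▸ lexOrder_le_of_coeff_ne_zero hd)).lt_of_ne
      fun h => hne (toLex.injective h).symm
  exact (weight_lt_weight_of_toLex_lt (sum_pow_rev_mul_lt e₀ (Nat.lt_succ_self _)) hlt).ne hw.symm
end
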